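/- arXiv:1303.7383 — 5 statements merged into one kernel-verified Lean document; each statement's English description precedes it below -/
import Mathlib

section
/- Let R be a commutative ring and A an n×n skew-symmetric matrix over R (Aᵀ = −A). Let u be an index with v = u+1 also an index, and suppose A_{uv} = 0 (hence A_{vu} = 0). Let A⁺ be the matrix obtained from A by setting the (u,v) entry to 1 and the (v,u) entry to −1, leaving all other entries unchanged, and let A₀ denote the (n−2)×(n−2) matrix obtained from A by deleting row and column u and row and column v. Then, writing M = X·I − A for the characteristic matrix over R[X] and θ_{ij}(M) for the (i,j) entry of the adjugate adj(M), one has charpoly(A⁺) = charpoly(A₀) + charpoly(A) + θ_{uv}(M) − θ_{vu}(M). -/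
/-!
Since `A` is skew-symmetric, `A v u = 0` as well, so `A⁺ = A + E_{uv} − E_{vu}` and the
characteristic matrix changes from `M` to `M − E_{uv} + E_{vu}`: row `u` gains `−e_v` and row `v`
gains `e_u`. Expanding the determinant multilinearly in these two rows gives `det M`, the two
single-row replacements `θ_{uv}(M)` and `−θ_{vu}(M)`, and minus the determinant with both rows
replaced by unit vectors. The latter is block triangular with a transposition in the `{u, v}`
block, so it is minus the principal minor of `M` off `{u, v}`, which is `charpoly(A₀)`.
-/

open Polynomial Matrix

namespace Matrix

variable {ι R : Type*} [DecidableEq ι] [CommRing R]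

theorem sub_single_add_single_eq_updateRow {u v : ι} (huv : u ≠ v) (M : Matrix ι ι R) :
    M - single u v 1 + single v u 1
      = (M.updateRow v (M v + Pi.single u 1)).updateRow u (M u - Pi.single v 1) := by
  ext i j
  by_cases hiu : i = u
  · subst hiu
    simp [Pi.single_apply, single_apply, eq_comm, huv.symm]
  by_cases hiv : i = v
  · subst hiv
    simp [hiu, Pi.single_apply, single_apply, eq_comm, Ne.symm hiu]
  · simp [hiu, hiv, Ne.symm hiu, Ne.symm hiv]

variable [Fintype ι]

theorem det_updateRow_self_add (M : Matrix ι ι R) (i : ι) (x : ι → R) :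
    (M.updateRow i (M i + x)).det = M.det + (M.updateRow i x).det := by
  rw [det_updateRow_add, updateRow_eq_self]

theorem det_updateRow_self_sub (M : Matrix ι ι R) (i : ι) (x : ι → R) :
    (M.updateRow i (M i - x)).det = M.det - (M.updateRow i x).det := by
  rw [sub_eq_add_neg, det_updateRow_self_add, ← neg_one_smul R x, det_updateRow_smul]
  ring

theorem det_updateRow_single_updateRow_single {u v : ι} (huv : u ≠ v) (M : Matrix ι ι R) :
    ((M.updateRow u (Pi.single v 1)).updateRow v (Pi.single u 1)).det
      = -(M.submatrix (fun i : {i // i ≠ u ∧ i ≠ v} => (i : ι)) (↑)).det := by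
  set N := (M.updateRow u (Pi.single v 1)).updateRow v (Pi.single u 1)
  have hN : ∀ i, ¬(i ≠ u ∧ i ≠ v) → ∀ j, (j ≠ u ∧ j ≠ v) → N i j = 0 := by
    rintro i hi j ⟨hju, hjv⟩
    obtain rfl | rfl : i = u ∨ i = v := by tauto
    · simp [N, updateRow_apply, huv, hjv]
    · simp [N, hju]
  have hsub : toSquareBlockProp N (fun i => i ≠ u ∧ i ≠ v) =
      M.submatrix (fun i : {i // i ≠ u ∧ i ≠ v} => (i : ι)) (↑) := by
    ext ⟨i, hiu, hiv⟩ j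
    simp [N, toSquareBlockProp_def, hiu, hiv]
  have hswap : toSquareBlockProp N (fun i => ¬(i ≠ u ∧ i ≠ v)) =
      (Equiv.swap ⟨u, by simp⟩ ⟨v, by simp⟩).permMatrix R := by
    ext ⟨i, hi⟩ ⟨j, hj⟩
    obtain rfl | rfl : u = i ∨ v = i := (by tauto) <;>
    obtain rfl | rfl : u = j ∨ v = j := (by tauto) <;>
    simp [N, toSquareBlockProp_def, updateRow_apply, huv, huv.symm]
  rw [twoBlockTriangular_det N _ hN, hsub, hswap, det_permutation,
    Equiv.Perm.sign_swap (by simpa using huv)]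
  simp

theorem det_sub_single_add_single {u v : ι} (huv : u ≠ v) (M : Matrix ι ι R) :
    (M - single u v 1 + single v u 1).det
      = M.det + (M.submatrix (fun i : {i // i ≠ u ∧ i ≠ v} => (i : ι)) (↑)).det
        + M.adjugate u v - M.adjugate v u := by
  set N := M.updateRow v (M v + Pi.single u 1)
  have hN : N.det = M.det + M.adjugate u v := by
    rw [det_updateRow_self_add, adjugate_apply]
  have hNu : N u = M u := updateRow_ne huv
  have hv : M.updateRow u (Pi.single v 1) v = M v := updateRow_ne huv.symm
  have hN' : (N.updateRow u (Pi.single v 1)).det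
      = M.adjugate v u - (M.submatrix (fun i : {i // i ≠ u ∧ i ≠ v} => (i : ι)) (↑)).det := by
    rw [updateRow_comm _ huv.symm, ← hv, det_updateRow_self_add,
      det_updateRow_single_updateRow_single huv, adjugate_apply, sub_eq_add_neg]
  rw [sub_single_add_single_eq_updateRow huv, ← hNu, det_updateRow_self_sub, hN, hN']
  ring

theorem charmatrix_add (A B : Matrix ι ι R) : charmatrix (A + B) = charmatrix A - B.map C := by
  simp only [charmatrix, map_add, RingHom.mapMatrix_apply]
  abel

theorem charmatrix_submatrix {κ : Type*} [Fintype κ] [DecidableEq κ] (A : Matrix ι ι R)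
    {e : κ → ι} (he : Function.Injective e) :
    charmatrix (A.submatrix e e) = (charmatrix A).submatrix e e := by
  ext i j : 1
  by_cases h : i = j
  · simp [h]
  · simp [h, he.ne h]

end Matrix

/-- the "adding an edge" theorem for skew-symmetric matrices. -/
theorem charpoly_add_edge {R : Type*} [CommRing R] {n : ℕ}
    (A : Matrix (Fin n) (Fin n) R) (hskew : Aᵀ = -A)
    (u v : Fin n) (huv : (v : ℕ) = (u : ℕ) + 1) (h0 : A u v = 0) :
    (Matrix.of (fun i j : Fin n =>
        if i = u ∧ j = v then 1 else if i = v ∧ j = u then -1 else A i j)).charpoly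
      = (A.submatrix (fun i : {i : Fin n // i ≠ u ∧ i ≠ v} => (i : Fin n))
          (fun j : {i : Fin n // i ≠ u ∧ i ≠ v} => (j : Fin n))).charpoly
        + A.charpoly
        + (Matrix.charmatrix A).adjugate u v - (Matrix.charmatrix A).adjugate v u := by
  have hne : u ≠ v := Fin.ne_of_val_ne (by omega)
  have hvu : A v u = 0 := by simpa [h0] using congr_fun₂ hskew u v
  have hplus : Matrix.of (fun i j : Fin n =>
        if i = u ∧ j = v then 1 else if i = v ∧ j = u then -1 else A i j)
      = A + (single u v 1 - single v u 1) := by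
    ext i j
    simp only [of_apply, Matrix.add_apply, Matrix.sub_apply, single_apply]
    grind
  have hchar : charmatrix (A + (single u v 1 - single v u 1))
      = charmatrix A - single u v 1 + single v u 1 := by
    rw [charmatrix_add, Matrix.map_sub _ (map_sub C), map_single, map_single, map_one, sub_add]
  rw [hplus, charpoly, hchar, det_sub_single_add_single hne, charpoly, charpoly,
    charmatrix_submatrix _ Subtype.val_injective]
  ring
end

section
/- Let A be an n×n rational matrix and B an m×m rational matrix, each a skew-adjacency matrix of a linearly ordered graph (i.e. Aᵀ = −A with every entry of A above the diagonal in {0,1}, and likewise for B), with n, m ≥ 1. Let J denote the n×m all-ones matrix, and let M = [[A, J],[−Jᵀ, B]] be the (n+m)×(n+m) skew-adjacency matrix of the join. For a k×k skew-adjacency matrix C, let cone(C) denote the (k+1)×(k+1) matrix whose first row is (0,1,1,…,1), whose first column is (0,−1,−1,…,−1)ᵀ, and whose remaining k×k block is C. Then charpoly(M) = charpoly(A)·charpoly(B) + (charpoly(cone(A)) − X·charpoly(A)) · (charpoly(cone(B)) − X·charpoly(B)) in ℚ[X]. -/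
open Polynomial Matrix

/-!
Over the fraction field of `R[X]` put `s(C) = 1ᵀ (X - C)⁻¹ 1`. A Schur complement reduces the
characteristic matrix `[[X - A, -J], [J, X - B]]` of the join to `det (X - A) · det (X - B + s(A) J)`,
and the matrix determinant lemma evaluates this as `χ_A χ_B (1 + s(A) s(B))`. The cone over `C` is
the join of the `1 × 1` zero matrix, for which `χ = X` and `s = 1 / X`, with `C`; hence
`χ_(cone C) - X χ_C = χ_C s(C)`, and substituting into the join formula gives the theorem.
-/

/-- The skew-adjacency matrix of the join of a single (first) vertex with the
linearly ordered graph whose skew-adjacency matrix is `C`. -/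
def cone {k : ℕ} (C : Matrix (Fin k) (Fin k) ℚ) :
    Matrix (Fin 1 ⊕ Fin k) (Fin 1 ⊕ Fin k) ℚ :=
  Matrix.fromBlocks 0 (Matrix.of fun _ _ => 1) (Matrix.of fun _ _ => -1) C

namespace Matrix

variable {α : Type*} [CommRing α] {ι κ ν : Type*} [Fintype ι] [Fintype κ]

def entrySum (M : Matrix ι κ α) : α := ∑ i, ∑ j, M i j

theorem of_one_mul_mul_of_one (M : Matrix ι κ α) :
    (of fun _ _ => 1 : Matrix ν ι α) * M * (of fun _ _ => 1 : Matrix κ ν α)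
      = of fun _ _ => entrySum M := by
  ext
  simp [mul_apply, entrySum, Finset.sum_comm (γ := κ)]

theorem det_add_of_const [DecidableEq κ] {Q : Matrix κ κ α} (hQ : IsUnit Q.det) (c : α) :
    (Q + of fun _ _ => c).det = Q.det * (1 + c * entrySum Q⁻¹) := by
  have hc : (of fun _ _ => c : Matrix κ κ α)
      = replicateCol (Fin 1) (fun _ : κ => c) * replicateRow (Fin 1) (fun _ : κ => (1 : α)) := by
    ext; simp [replicateCol, replicateRow, mul_apply]
  rw [hc, det_add_mul _ _ hQ, det_fin_one]
  simp only [add_apply, one_apply_eq, mul_apply, replicateRow_apply, replicateCol_apply, mul_one,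
    mul_comm, Finset.mul_sum, entrySum]
  rw [Finset.sum_comm]

theorem det_fromBlocks_neg_of_one_of_one [DecidableEq ι] [DecidableEq κ]
    {P : Matrix ι ι α} {Q : Matrix κ κ α} (hP : IsUnit P.det) (hQ : IsUnit Q.det) :
    (fromBlocks P (-of fun _ _ => 1) (of fun _ _ => 1) Q).det
      = P.det * Q.det * (1 + entrySum P⁻¹ * entrySum Q⁻¹) := by
  let _ := P.invertibleOfIsUnitDet hP
  rw [det_fromBlocks₁₁, invOf_eq_nonsing_inv, Matrix.mul_neg, sub_neg_eq_add,
    of_one_mul_mul_of_one, det_add_of_const hQ, mul_assoc]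

end Matrix

section Charpoly

variable {R : Type*} [CommRing R] {ι κ : Type*} [Fintype ι] [DecidableEq ι]
  [Fintype κ] [DecidableEq κ]

local notation "K" => FractionRing R[X]

theorem det_charmatrix_map_algebraMap (A : Matrix ι ι R) :
    ((charmatrix A).map (algebraMap R[X] K)).det = algebraMap R[X] K A.charpoly :=
  (RingHom.map_det _ _).symm

theorem isUnit_det_charmatrix_map_algebraMap [IsDomain R] (A : Matrix ι ι R) :
    IsUnit ((charmatrix A).map (algebraMap R[X] K)).det := by
  rw [det_charmatrix_map_algebraMap, isUnit_iff_ne_zero,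
    map_ne_zero_iff _ (IsFractionRing.injective R[X] K)]
  exact A.charpoly_monic.ne_zero

noncomputable def resolventEntrySum (A : Matrix ι ι R) : K :=
  entrySum ((charmatrix A).map (algebraMap R[X] K))⁻¹

theorem algebraMap_charpoly_fromBlocks_of_one [IsDomain R] (A : Matrix ι ι R) (B : Matrix κ κ R) :
    algebraMap R[X] K (fromBlocks A (of fun _ _ => 1) (of fun _ _ => -1) B).charpoly
      = algebraMap R[X] K A.charpoly * algebraMap R[X] K B.charpoly
        * (1 + resolventEntrySum A * resolventEntrySum B) := by
  have h₁₂ : (-(of fun _ _ => 1 : Matrix ι κ R).map C).map (algebraMap R[X] K)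
      = -of fun _ _ => 1 := by
    ext; simp
  have h₂₁ : (-(of fun _ _ => -1 : Matrix κ ι R).map C).map (algebraMap R[X] K)
      = of fun _ _ => 1 := by
    ext; simp
  rw [charpoly, charmatrix_fromBlocks, RingHom.map_det, RingHom.mapMatrix_apply, fromBlocks_map,
    h₁₂, h₂₁, det_fromBlocks_neg_of_one_of_one (isUnit_det_charmatrix_map_algebraMap A)
    (isUnit_det_charmatrix_map_algebraMap B), det_charmatrix_map_algebraMap,
    det_charmatrix_map_algebraMap, resolventEntrySum, resolventEntrySum]

theorem resolventEntrySum_zero [IsDomain R] :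
    resolventEntrySum (0 : Matrix ι ι R) = Fintype.card ι / algebraMap R[X] K X := by
  have hX : algebraMap R[X] K X ≠ 0 :=
    (map_ne_zero_iff _ (IsFractionRing.injective R[X] K)).2 X_ne_zero
  have hinv : ((scalar ι X).map (algebraMap R[X] K))⁻¹ = scalar ι (algebraMap R[X] K X)⁻¹ := by
    refine inv_eq_left_inv ?_
    simp [scalar_apply, diagonal_map, hX]
  rw [resolventEntrySum, charmatrix_zero, hinv]
  simp [entrySum, scalar_apply, diagonal_apply, div_eq_mul_inv]

end Charpoly

theorem algebraMap_charpoly_cone_sub {k : ℕ} (C : Matrix (Fin k) (Fin k) ℚ) :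
    algebraMap ℚ[X] (FractionRing ℚ[X]) ((cone C).charpoly - X * C.charpoly)
      = algebraMap ℚ[X] _ C.charpoly * resolventEntrySum C := by
  have hX : algebraMap ℚ[X] (FractionRing ℚ[X]) X ≠ 0 :=
    (map_ne_zero_iff _ (IsFractionRing.injective ℚ[X] _)).2 X_ne_zero
  have hjoin := algebraMap_charpoly_fromBlocks_of_one (0 : Matrix (Fin 1) (Fin 1) ℚ) C
  rw [charpoly_zero, resolventEntrySum_zero, Fintype.card_unique, pow_one, Nat.cast_one] at hjoin
  rw [map_sub, map_mul, cone, hjoin]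
  field_simp
  ring

theorem charpoly_join_general {n m : ℕ}
    (A : Matrix (Fin n) (Fin n) ℚ) (B : Matrix (Fin m) (Fin m) ℚ) :
    (Matrix.fromBlocks A (Matrix.of fun _ _ => (1 : ℚ))
        (Matrix.of fun _ _ => (-1 : ℚ)) B).charpoly
      = A.charpoly * B.charpoly
        + ((cone A).charpoly - X * A.charpoly) * ((cone B).charpoly - X * B.charpoly) := by
  apply IsFractionRing.injective ℚ[X] (FractionRing ℚ[X])
  rw [map_add, map_mul, map_mul, algebraMap_charpoly_fromBlocks_of_one,
    algebraMap_charpoly_cone_sub, algebraMap_charpoly_cone_sub]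
  ring

/-- the join theorem for skew-adjacency matrices of linearly ordered
graphs. -/
theorem charpoly_join {n m : ℕ} (hn : 1 ≤ n) (hm : 1 ≤ m)
    (A : Matrix (Fin n) (Fin n) ℚ) (B : Matrix (Fin m) (Fin m) ℚ)
    (hAskew : Aᵀ = -A) (hA01 : ∀ i j : Fin n, i < j → A i j = 0 ∨ A i j = 1)
    (hBskew : Bᵀ = -B) (hB01 : ∀ i j : Fin m, i < j → B i j = 0 ∨ B i j = 1) :
    (Matrix.fromBlocks A (Matrix.of fun _ _ => (1 : ℚ))
        (Matrix.of fun _ _ => (-1 : ℚ)) B).charpoly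
      = A.charpoly * B.charpoly
        + ((cone A).charpoly - X * A.charpoly) * ((cone B).charpoly - X * B.charpoly) :=
  charpoly_join_general A B
end

section
/- Let R be a commutative ring and let p, q, r, s be natural numbers. Let A (p×p), B (p×q), C (q×p), D (q×q), E (r×r), F (r×s), G (s×r), H (s×s) be matrices over R, and let α ∈ R^p, β ∈ R^q, γ ∈ R^r, δ ∈ R^s be column vectors. Define the following square matrices: M_G = [[A, α, B],[−αᵀ, 0, βᵀ],[C, −β, D]] of size p+1+q; M_{G−u} = [[A, B],[C, D]] of size p+q; M_{H−v} = [[E, F],[G, H]] of size r+s; M_{H↔v} = [[0, γᵀ, δᵀ],[−γ, E, F],[−δ, G, H]] of size 1+r+s; and the coalescence matrix M = [[A, α, B, 0, 0],[−αᵀ, 0, βᵀ, γᵀ, δᵀ],[C, −β, D, 0, 0],[0, −γ, 0, E, F],[0, −δ, 0, G, H]] of size p+1+q+r+s. Then charpoly(M) = charpoly(M_G)·charpoly(M_{H−v}) + charpoly(M_{G−u})·charpoly(M_{H↔v}) − X·charpoly(M_{G−u})·charpoly(M_{H−v}) in R[X]. -/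
/-!
Put the shared vertex between the two remaining blocks. Then `X • 1 - M` has the shape
`[[P, c, 0], [r, x, t], [0, u, Q]]` with `P = X • 1 - M_{G-u}`, `Q = X • 1 - M_{H-v}`
and `x = X`. Splitting its middle row as `(r, x, 0) + (0, 0, t)`, the determinant becomes
`det [[P, c], [r, x]] * det Q + det P * det [[0, t], [u, Q]]`, both terms being block
triangular, and `det [[0, t], [u, Q]] = det [[x, t], [u, Q]] - x * det Q` by the same
splitting of the first row.
-/

open Polynomial Matrix

def Equiv.sumLeftComm (α β γ : Type*) : α ⊕ (β ⊕ γ) ≃ β ⊕ (α ⊕ γ) :=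
  (sumAssoc α β γ).symm.trans
    ((sumCongr (sumComm α β) (Equiv.refl γ)).trans (sumAssoc β α γ))

namespace Matrix

variable {R : Type*} {k l : Type*}

def borderLast (P : Matrix k k R) (c r : k → R) (a : R) : Matrix (k ⊕ Fin 1) (k ⊕ Fin 1) R :=
  fromBlocks P (replicateCol (Fin 1) c) (replicateRow (Fin 1) r) (of fun _ _ => a)

def borderFirst (a : R) (t u : l → R) (Q : Matrix l l R) : Matrix (Fin 1 ⊕ l) (Fin 1 ⊕ l) R :=
  fromBlocks (of fun _ _ => a) (replicateRow (Fin 1) t) (replicateCol (Fin 1) u) Q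

lemma updateRow_borderFirst [DecidableEq l] (a a' : R) (t t' u : l → R) (Q : Matrix l l R) :
    (borderFirst a t u Q).updateRow (.inl 0) (Sum.elim (fun _ => a') t') =
      borderFirst a' t' u Q := by
  ext (i | i) (j | j) <;> simp [borderFirst, updateRow_apply, Fin.fin_one_eq_zero]

section Zero

variable [Zero R]

/-- The block matrix `[[P, c, 0], [r, a, t], [0, u, Q]]`. -/
def coalesce (P : Matrix k k R) (c r : k → R) (a : R) (t u : l → R) (Q : Matrix l l R) :
    Matrix (k ⊕ (Fin 1 ⊕ l)) (k ⊕ (Fin 1 ⊕ l)) R :=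
  fromBlocks P (fromCols (replicateCol (Fin 1) c) 0) (fromRows (replicateRow (Fin 1) r) 0)
    (borderFirst a t u Q)

lemma updateRow_coalesce [DecidableEq k] [DecidableEq l] (P : Matrix k k R) (c r r' : k → R)
    (a a' : R) (t t' u : l → R) (Q : Matrix l l R) :
    (coalesce P c r a t u Q).updateRow (.inr (.inl 0)) (Sum.elim r' (Sum.elim (fun _ => a') t')) =
      coalesce P c r' a' t' u Q := by
  ext (i | i | i) (j | j | j) <;>
    simp [coalesce, borderFirst, updateRow_apply, Fin.fin_one_eq_zero]

end Zero

variable [CommRing R] [Fintype k] [Fintype l] [DecidableEq k] [DecidableEq l]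

lemma det_borderFirst_zero (a : R) (u : l → R) (Q : Matrix l l R) :
    (borderFirst a 0 u Q).det = a * Q.det := by
  rw [borderFirst, replicateRow_zero, det_fromBlocks_zero₁₂, det_unique]
  rfl

lemma det_borderFirst (a : R) (t u : l → R) (Q : Matrix l l R) :
    (borderFirst a t u Q).det = a * Q.det + (borderFirst 0 t u Q).det := by
  have hrow : Sum.elim (fun _ => a) t =
      Sum.elim (fun _ => a) 0 + Sum.elim (fun _ : Fin 1 => 0) t := by
    ext (_ | _) <;> simp
  rw [← updateRow_borderFirst a a t t u Q, hrow, det_updateRow_add, updateRow_borderFirst,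
    updateRow_borderFirst, det_borderFirst_zero]

lemma det_coalesce_zero_right (P : Matrix k k R) (c r : k → R) (a : R) (u : l → R)
    (Q : Matrix l l R) :
    (coalesce P c r a 0 u Q).det = (borderLast P c r a).det * Q.det := by
  rw [← det_reindex_self (Equiv.sumAssoc k (Fin 1) l).symm]
  convert det_fromBlocks_zero₁₂ (borderLast P c r a)
    (fromCols 0 (replicateCol (Fin 1) u)) Q using 2
  ext ((i | i) | i) ((j | j) | j) <;> simp [coalesce, borderFirst, borderLast]

lemma det_coalesce_zero_left (P : Matrix k k R) (c : k → R) (t u : l → R) (Q : Matrix l l R) :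
    (coalesce P c 0 0 t u Q).det = P.det * (borderFirst 0 t u Q).det := by
  rw [coalesce, replicateRow_zero, fromRows_zero, det_fromBlocks_zero₂₁]

theorem det_coalesce (P : Matrix k k R) (c r : k → R) (a : R) (t u : l → R) (Q : Matrix l l R) :
    (coalesce P c r a t u Q).det =
      (borderLast P c r a).det * Q.det + P.det * (borderFirst a t u Q).det - a * P.det * Q.det := by
  have hrow : Sum.elim r (Sum.elim (fun _ => a) t) =
      Sum.elim r (Sum.elim (fun _ => a) 0) +
        Sum.elim (0 : k → R) (Sum.elim (fun _ : Fin 1 => 0) t) := by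
    ext (_ | _ | _) <;> simp
  rw [← updateRow_coalesce P c r r a a t t u Q, hrow, det_updateRow_add, updateRow_coalesce,
    updateRow_coalesce, det_coalesce_zero_right, det_coalesce_zero_left, det_borderFirst a]
  ring

lemma charmatrix_borderLast (P : Matrix k k R) (c r : k → R) (a : R) :
    charmatrix (borderLast P c r a) =
      borderLast (charmatrix P) (fun i => -C (c i)) (fun j => -C (r j)) (X - C a) := by
  rw [borderLast, borderLast, charmatrix_fromBlocks]
  congr 1
  ext i j : 1
  simp [Subsingleton.elim i j]

lemma charmatrix_borderFirst (a : R) (t u : l → R) (Q : Matrix l l R) :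
    charmatrix (borderFirst a t u Q) =
      borderFirst (X - C a) (fun j => -C (t j)) (fun i => -C (u i)) (charmatrix Q) := by
  rw [borderFirst, borderFirst, charmatrix_fromBlocks]
  congr 1
  ext i j : 1
  simp [Subsingleton.elim i j]

lemma charmatrix_coalesce (P : Matrix k k R) (c r : k → R) (a : R) (t u : l → R)
    (Q : Matrix l l R) :
    charmatrix (coalesce P c r a t u Q) =
      coalesce (charmatrix P) (fun i => -C (c i)) (fun j => -C (r j)) (X - C a)
        (fun j => -C (t j)) (fun i => -C (u i)) (charmatrix Q) := by
  rw [coalesce, charmatrix_fromBlocks, charmatrix_borderFirst]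
  ext (i | i | i) (j | j | j) <;> simp [coalesce]

theorem charpoly_coalesce (P : Matrix k k R) (c r : k → R) (a : R) (t u : l → R)
    (Q : Matrix l l R) :
    (coalesce P c r a t u Q).charpoly =
      (borderLast P c r a).charpoly * Q.charpoly + P.charpoly * (borderFirst a t u Q).charpoly -
        (X - C a) * P.charpoly * Q.charpoly := by
  simp only [charpoly, charmatrix_coalesce, charmatrix_borderLast, charmatrix_borderFirst,
    det_coalesce]

end Matrix

/-- the coalescence theorem for characteristic polynomials of
skew-adjacency matrices of linearly ordered graphs. -/
theorem charpoly_coalescence {R : Type*} [CommRing R] {p q r s : ℕ}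
    (A : Matrix (Fin p) (Fin p) R) (B : Matrix (Fin p) (Fin q) R)
    (C : Matrix (Fin q) (Fin p) R) (D : Matrix (Fin q) (Fin q) R)
    (E : Matrix (Fin r) (Fin r) R) (F : Matrix (Fin r) (Fin s) R)
    (G : Matrix (Fin s) (Fin r) R) (H : Matrix (Fin s) (Fin s) R)
    (α : Fin p → R) (β : Fin q → R) (γ : Fin r → R) (δ : Fin s → R)
    -- `M_G` : the skew-adjacency matrix of `G`, with distinguished middle vertex `u`
    (MG : Matrix (Fin p ⊕ (Fin 1 ⊕ Fin q)) (Fin p ⊕ (Fin 1 ⊕ Fin q)) R)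
    (hMG : MG = Matrix.fromBlocks A
      (Matrix.of fun i j => Sum.elim (fun _ => α i) (fun b => B i b) j)
      (Matrix.of fun i j => Sum.elim (fun _ => -α j) (fun a => C a j) i)
      (Matrix.fromBlocks 0 (Matrix.of fun _ b => β b) (Matrix.of fun a _ => -β a) D))
    -- `M_{G-u}`
    (MGu : Matrix (Fin p ⊕ Fin q) (Fin p ⊕ Fin q) R)
    (hMGu : MGu = Matrix.fromBlocks A B C D)
    -- `M_{H-v}`
    (MHv : Matrix (Fin r ⊕ Fin s) (Fin r ⊕ Fin s) R)
    (hMHv : MHv = Matrix.fromBlocks E F G H)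
    -- `M_{H↔v}` : vertex `v` promoted to the first position
    (MHp : Matrix (Fin 1 ⊕ (Fin r ⊕ Fin s)) (Fin 1 ⊕ (Fin r ⊕ Fin s)) R)
    (hMHp : MHp = Matrix.fromBlocks 0
      (Matrix.of fun _ j => Sum.elim γ δ j)
      (Matrix.of fun i _ => -(Sum.elim γ δ i))
      (Matrix.fromBlocks E F G H))
    -- `M` : the skew-adjacency matrix of the coalescence `G · H`
    (M : Matrix (Fin p ⊕ (Fin 1 ⊕ (Fin q ⊕ (Fin r ⊕ Fin s))))
        (Fin p ⊕ (Fin 1 ⊕ (Fin q ⊕ (Fin r ⊕ Fin s)))) R)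
    (hM : M = Matrix.fromBlocks A
      (Matrix.of fun i j =>
        Sum.elim (fun _ => α i) (Sum.elim (fun b => B i b) (fun _ => (0 : R))) j)
      (Matrix.of fun i j =>
        Sum.elim (fun _ => -α j) (Sum.elim (fun a => C a j) (fun _ => (0 : R))) i)
      (Matrix.fromBlocks 0
        (Matrix.of fun _ j => Sum.elim β (Sum.elim γ δ) j)
        (Matrix.of fun i _ => -(Sum.elim β (Sum.elim γ δ) i))
        (Matrix.fromBlocks D 0 0 (Matrix.fromBlocks E F G H)))) :
    M.charpoly
      = MG.charpoly * MHv.charpoly + MGu.charpoly * MHp.charpoly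
        - X * MGu.charpoly * MHv.charpoly := by
  let colG := Sum.elim α (-β)
  let rowG := Sum.elim (-α) β
  let rowH := Sum.elim γ δ
  let eG := (Equiv.sumAssoc (Fin p) (Fin q) (Fin 1)).trans
    (Equiv.sumCongr (Equiv.refl _) (Equiv.sumComm _ _))
  let eM := (Equiv.sumAssoc (Fin p) (Fin q) (Fin 1 ⊕ (Fin r ⊕ Fin s))).trans
    (Equiv.sumCongr (Equiv.refl _) (Equiv.sumLeftComm _ _ _))
  have hMG' : MG = reindex eG eG (borderLast MGu colG rowG 0) := by
    subst hMG hMGu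
    ext (i | i | i) (j | j | j) <;> simp [eG, colG, rowG, borderLast]
  have hMHp' : MHp = borderFirst 0 rowH (-rowH) MHv := by
    subst hMHp hMHv
    ext (i | i) (j | j) <;> simp [rowH, borderFirst]
  have hM' : M = reindex eM eM (coalesce MGu colG rowG 0 rowH (-rowH) MHv) := by
    subst hM hMGu hMHv
    ext (i | i | i | i | i) (j | j | j | j | j) <;>
      simp [eM, colG, rowG, rowH, coalesce, borderFirst, Equiv.sumLeftComm]
  rw [hM', hMG', hMHp', charpoly_reindex, charpoly_reindex, charpoly_coalesce, map_zero, sub_zero]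
end

section
/- For each natural number n ≥ 1 let T_n be the n×n rational matrix with (i,j) entry equal to 1 if j = i+1, equal to −1 if i = j+1, and 0 otherwise (the skew-adjacency matrix of the linearly ordered path P_n). Then in ℚ[X]: 2^n · charpoly(T_n) = Σ_{j=0}^{⌊n/2⌋} C(n+1, 2j+1) · X^{n−2j} · (X² + 4)^j, where C(n+1, 2j+1) is a binomial coefficient. -/
/-!
Expanding `det (X • 1 - T_n)` along its first row gives the continuant recurrence
`p (n + 2) = X * p (n + 1) + p n`, `p 0 = 1`, `p 1 = X`, so `u n = 2 ^ n * p n` satisfies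
`u (n + 2) = 2 * X * u (n + 1) + 4 * u n`. This is also the recurrence of the `ω`-coordinate of
`(X + ω) ^ (n + 1)` in `ℚ[X][ω]` with `ω ^ 2 = X ^ 2 + 4`, because `X + ω` is a root of
`t ^ 2 - 2 * X * t - 4`; the initial values agree too. The binomial theorem then reads off that
coordinate as the stated sum, only odd powers of `ω` contributing.
-/

open Polynomial Matrix

/-- The skew-adjacency matrix of the linearly ordered path `P_n`. -/
def pathSkew (n : ℕ) : Matrix (Fin n) (Fin n) ℚ :=
  Matrix.of fun i j =>
    if (j : ℕ) = (i : ℕ) + 1 then 1 else if (i : ℕ) = (j : ℕ) + 1 then -1 else 0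

open Finset

namespace Matrix

variable {R : Type*} [CommRing R]

def tridiagonal (n : ℕ) (a b c : R) : Matrix (Fin n) (Fin n) R :=
  of fun i j =>
    if (i : ℕ) = j then a else if (j : ℕ) = i + 1 then b else if (i : ℕ) = j + 1 then c else 0

lemma tridiagonal_submatrix_succ (n : ℕ) (a b c : R) :
    (tridiagonal (n + 1) a b c).submatrix Fin.succ Fin.succ = tridiagonal n a b c := by
  ext i j
  simp [tridiagonal]

theorem det_tridiagonal_succ_succ (n : ℕ) (a b c : R) :
    (tridiagonal (n + 2) a b c).det
      = a * (tridiagonal (n + 1) a b c).det - b * c * (tridiagonal n a b c).det := by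
  -- Deleting row 0 and column 1 leaves a minor whose first column is `(c, 0, …, 0)`.
  have minor_one : ((tridiagonal (n + 2) a b c).submatrix Fin.succ (Fin.succ 0).succAbove).det
      = c * (tridiagonal n a b c).det := by
    have corner : ((tridiagonal (n + 2) a b c).submatrix Fin.succ (Fin.succ 0).succAbove).submatrix
        Fin.succ Fin.succ = tridiagonal n a b c := by
      ext i j
      simp [tridiagonal]
    rw [det_succ_column_zero, Fin.sum_univ_succ, Fin.succAbove_zero, corner]
    simp [tridiagonal]
  rw [det_succ_row_zero, Fin.sum_univ_succ, Fin.sum_univ_succ, Fin.succAbove_zero,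
    tridiagonal_submatrix_succ, minor_one]
  simp [tridiagonal]
  ring

end Matrix

namespace QuadraticAlgebra

variable {R : Type*} [CommRing R] {d : R}

lemma omega_pow_two_mul (j : ℕ) :
    (ω : QuadraticAlgebra R d 0) ^ (2 * j) = algebraMap R _ (d ^ j) := by
  rw [pow_mul, sq, omega_mul_omega_eq_algebraMap]
  simp

lemma im_omega_pow_two_mul (j : ℕ) : ((ω : QuadraticAlgebra R d 0) ^ (2 * j)).im = 0 := by
  rw [omega_pow_two_mul, algebraMap_im]

lemma im_omega_pow_two_mul_add_one (j : ℕ) :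
    ((ω : QuadraticAlgebra R d 0) ^ (2 * j + 1)).im = d ^ j := by
  rw [pow_succ, omega_pow_two_mul, ← Algebra.smul_def]
  simp

theorem im_algebraMap_add_omega_pow_succ (r : R) (n : ℕ) :
    ((algebraMap R (QuadraticAlgebra R d 0) r + ω) ^ (n + 1)).im
      = ∑ j ∈ range (n / 2 + 1),
          ((n + 1).choose (2 * j + 1) : R) * r ^ (n - 2 * j) * d ^ j := by
  have expand : (algebraMap R (QuadraticAlgebra R d 0) r + ω) ^ (n + 1)
      = ∑ k ∈ range (n + 2), (((n + 1).choose k : R) * r ^ (n + 1 - k)) • ω ^ k := by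
    rw [add_comm, add_pow]
    refine sum_congr rfl fun k _ => ?_
    rw [Algebra.smul_def, map_mul, map_pow, map_natCast]
    ring
  have odd_terms : (range (n / 2 + 1)).image (2 * · + 1) ⊆ range (n + 2) := by
    intro k
    simp only [mem_image, mem_range]
    omega
  rw [expand, ← imₗ_apply, map_sum, ← sum_subset odd_terms, sum_image]
  · refine sum_congr rfl fun j _ => ?_
    rw [map_smul, imₗ_apply, im_omega_pow_two_mul_add_one, smul_eq_mul,
      show n + 1 - (2 * j + 1) = n - 2 * j by omega]
  · intro i _ j _ h
    simpa using h
  · intro k hk hk_odd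
    obtain ⟨j, rfl⟩ : Even k := Nat.not_odd_iff_even.mp fun ⟨j, hj⟩ =>
      hk_odd <| mem_image.mpr ⟨j, by rw [mem_range] at hk ⊢; omega, hj.symm⟩
    rw [map_smul, imₗ_apply, ← two_mul, im_omega_pow_two_mul, smul_zero]

theorem im_algebraMap_add_omega_pow_add_two (r : R) (m : ℕ) :
    ((algebraMap R (QuadraticAlgebra R d 0) r + ω) ^ (m + 2)).im
      = 2 * r * ((algebraMap R (QuadraticAlgebra R d 0) r + ω) ^ (m + 1)).im
        + (d - r ^ 2) * ((algebraMap R (QuadraticAlgebra R d 0) r + ω) ^ m).im := by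
  set u := algebraMap R (QuadraticAlgebra R d 0) r + ω
  have sq_u : u ^ 2 = (2 * r) • u + (d - r ^ 2) • 1 := by
    ext <;> simp [u, sq] <;> ring
  rw [pow_add, sq_u, mul_add, mul_smul_comm, mul_smul_comm, mul_one, ← pow_succ]
  simp

end QuadraticAlgebra

open QuadraticAlgebra

lemma charpoly_pathSkew (n : ℕ) : (pathSkew n).charpoly = (tridiagonal n X (-1) 1).det := by
  rw [Matrix.charpoly]
  congr 1
  ext i j
  simp only [charmatrix_apply, pathSkew, tridiagonal, of_apply, Fin.ext_iff, diagonal_apply]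
  split_ifs <;> simp_all

lemma two_pow_mul_charpoly_pathSkew : ∀ n : ℕ, (2 ^ n : ℚ[X]) * (pathSkew n).charpoly
    = ((algebraMap ℚ[X] (QuadraticAlgebra ℚ[X] (X ^ 2 + 4) 0) X + ω) ^ (n + 1)).im
  | 0 => by simp
  | 1 => by simp [charpoly_pathSkew, tridiagonal, sq, two_mul]
  | n + 2 => by
    rw [im_algebraMap_add_omega_pow_add_two, ← two_pow_mul_charpoly_pathSkew n,
      ← two_pow_mul_charpoly_pathSkew (n + 1)]
    simp only [charpoly_pathSkew, det_tridiagonal_succ_succ]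
    ring

theorem charpoly_pathSkew_sum_general (n : ℕ) :
    (2 ^ n : ℚ[X]) * (pathSkew n).charpoly
      = ∑ j ∈ Finset.range (n / 2 + 1),
          ((n + 1).choose (2 * j + 1) : ℚ[X]) * X ^ (n - 2 * j) * (X ^ 2 + 4) ^ j := by
  rw [two_pow_mul_charpoly_pathSkew, im_algebraMap_add_omega_pow_succ]

/-- the characteristic polynomial of the skew-adjacency matrix of the
linearly ordered path `P_n` as a binomial sum. -/
theorem charpoly_pathSkew_sum (n : ℕ) (hn : 1 ≤ n) :
    (2 ^ n : ℚ[X]) * (pathSkew n).charpoly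
      = ∑ j ∈ Finset.range (n / 2 + 1),
          ((n + 1).choose (2 * j + 1) : ℚ[X]) * X ^ (n - 2 * j) * (X ^ 2 + 4) ^ j :=
  charpoly_pathSkew_sum_general n
end

section
/- For each natural number n ≥ 1 let A_n be the n×n rational matrix with (i,j) entry equal to 1 if i < j, equal to −1 if i > j, and 0 if i = j (the skew-adjacency matrix of the linearly ordered complete graph K_n). Then in ℚ[X]: charpoly(A_n) = ((X−1)^n + (X+1)^n)/2; equivalently, 2 · charpoly(A_n) = (X−1)^n + (X+1)^n. -/
/-!
Let `D(x, a, b)` be the determinant of the `n × n` matrix with `x` on the diagonal, `a` above it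
and `b` below it. Adding `t` to every entry changes the determinant affinely in `t`, since after
subtracting one row from all the others `t` survives in that row only. At `t = -a` and `t = -b`
the matrix becomes triangular, with determinants `(x - a)^n` and `(x - b)^n`; eliminating the
linear term gives `(b - a) D(x, a, b) = b (x - a)^n - a (x - b)^n`. The characteristic matrix
of `A_n` is the case `x = X`, `a = -1`, `b = 1`.
-/

open Polynomial Matrix

/-- The skew-adjacency matrix of the linearly ordered complete graph `K_n`, over `ℚ`. -/
def completeSkewQ (n : ℕ) : Matrix (Fin n) (Fin n) ℚ :=
  Matrix.of fun i j => if i < j then 1 else if j < i then -1 else 0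

namespace Matrix

variable {R ι : Type*} [CommRing R]

theorem det_add_smul_replicateRow [Fintype ι] [DecidableEq ι] (A : Matrix ι ι R) (v : ι → R)
    (k : ι) (t : R) :
    det (A + t • replicateRow ι v) =
      det A + t * det (updateRow (A - replicateRow ι (A k)) k v) := by
  have hrow : ∀ s : R, det (A + s • replicateRow ι v) =
      det (updateRow (A - replicateRow ι (A k)) k (A k + s • v)) := fun s =>
    det_eq_of_forall_row_eq_smul_add_const (fun i => if i = k then 0 else 1) k (if_pos rfl)
      fun i j => by
        rcases eq_or_ne i k with rfl | hi
        · simp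
        · simp [hi]
          ring
  have hrow₀ := hrow 0
  simp only [zero_smul, add_zero] at hrow₀
  rw [hrow, det_updateRow_add, det_updateRow_smul, ← hrow₀]

variable [LinearOrder ι]

def diagUpperLower (x a b : R) : Matrix ι ι R :=
  of fun i j => if i < j then a else if j < i then b else x

theorem diagUpperLower_add_smul_replicateRow_one (x a b t : R) :
    diagUpperLower x a b + t • replicateRow ι 1 = diagUpperLower (x + t) (a + t) (b + t) := by
  ext i j
  simp only [diagUpperLower, add_apply, smul_apply, replicateRow_apply, of_apply]
  split_ifs <;> simp

variable [Fintype ι]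

theorem det_diagUpperLower_zero_left (x b : R) :
    det (diagUpperLower x 0 b : Matrix ι ι R) = x ^ Fintype.card ι := by
  rw [det_of_isLowerTriangular (diagUpperLower x 0 b) fun i j hij =>
    if_pos (OrderDual.toDual_lt_toDual.mp hij)]
  simp [diagUpperLower]

theorem det_diagUpperLower_zero_right (x a : R) :
    det (diagUpperLower x a 0 : Matrix ι ι R) = x ^ Fintype.card ι := by
  rw [det_of_isUpperTriangular fun i j hij => ?_]
  · simp [diagUpperLower]
  · have hji : j < i := hij
    simp [diagUpperLower, hji, hji.not_gt]

theorem det_diagUpperLower (x a b : R) :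
    (b - a) * det (diagUpperLower x a b : Matrix ι ι R) =
      b * (x - a) ^ Fintype.card ι - a * (x - b) ^ Fintype.card ι := by
  rcases isEmpty_or_nonempty ι with hι | ⟨⟨k⟩⟩
  · simp
  have shift := fun t => det_add_smul_replicateRow (diagUpperLower x a b : Matrix ι ι R) 1 k t
  simp only [diagUpperLower_add_smul_replicateRow_one] at shift
  have ha := shift (-a)
  have hb := shift (-b)
  rw [add_neg_cancel, det_diagUpperLower_zero_left] at ha
  rw [add_neg_cancel, det_diagUpperLower_zero_right] at hb
  linear_combination a * hb - b * ha

theorem charmatrix_diagUpperLower (x a b : R) :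
    charmatrix (diagUpperLower x a b : Matrix ι ι R) =
      diagUpperLower (X - C x) (-C a) (-C b) := by
  ext i j
  rcases lt_trichotomy i j with h | rfl | h
  · simp [charmatrix_apply_ne _ _ _ h.ne, diagUpperLower, h]
  · simp [diagUpperLower]
  · simp [charmatrix_apply_ne _ _ _ h.ne', diagUpperLower, h, h.not_gt]

end Matrix

theorem charpoly_completeSkew_general (n : ℕ) :
    (completeSkewQ n).charpoly = Polynomial.C (1 / 2 : ℚ) * ((X - 1) ^ n + (X + 1) ^ n) ∧
      2 * (completeSkewQ n).charpoly = (X - 1) ^ n + (X + 1) ^ n := by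
  have hdet := det_diagUpperLower (X : ℚ[X]) (-1) 1 (ι := Fin n)
  have hchar : (completeSkewQ n).charpoly =
      det (diagUpperLower (X : ℚ[X]) (-1) 1 : Matrix (Fin n) (Fin n) ℚ[X]) := by
    rw [charpoly, show completeSkewQ n = diagUpperLower 0 1 (-1) from rfl,
      charmatrix_diagUpperLower]
    simp
  have h2 : 2 * (completeSkewQ n).charpoly = (X - 1) ^ n + (X + 1) ^ n := by
    rw [hchar]
    simp only [Fintype.card_fin] at hdet
    linear_combination hdet
  refine ⟨?_, h2⟩
  rw [← h2, ← mul_assoc, ← C_ofNat, ← C_mul]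
  norm_num

/-- the characteristic polynomial of the skew-adjacency matrix of the
linearly ordered complete graph `K_n` is `((X-1)^n + (X+1)^n)/2`. -/
theorem charpoly_completeSkew (n : ℕ) (hn : 1 ≤ n) :
    (completeSkewQ n).charpoly = Polynomial.C (1 / 2 : ℚ) * ((X - 1) ^ n + (X + 1) ^ n) ∧
      2 * (completeSkewQ n).charpoly = (X - 1) ^ n + (X + 1) ^ n :=
  charpoly_completeSkew_general n
end
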